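/- Fix M > 0. Every monic real polynomial p of degree n satisfying max_{x ∈ [−1,1]} |p(x)| ≤ M · 2^{1−n} has a coefficient of absolute value at least B · 2^{bn} / n for some constants B > 0 and b > 0 depending only on M, for all sufficiently large n. -/

import Mathlib

/-!
Write `p = 2^(1-n) T_n + q` with `deg q < n`; then `|q| ≤ (M + 1) 2^(1-n)` on `[-1, 1]`, and
orthogonality of the Chebyshev polynomials bounds every Chebyshev coefficient of `q` by twice
that. If `2z = w + w⁻¹` then `2 T_k(z) = w^k + w^(-k)`, so for `|w| = ρ` large compared with `M`
the term `2^(1-n) T_n(z)` dominates and `|p(z)| ≳ 2^(-n) ρ^n`. Taking `w = iρ`, the point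
`z = iy` with `2y = ρ - ρ⁻¹ < ρ` satisfies `|p(z)| ≤ (n + 1) max_j |a_j| y^n`, whence
`max_j |a_j| ≳ (ρ / 2y)^n / n` with `ρ / 2y > 1`.
-/

open Polynomial Finset Real MeasureTheory
open Polynomial.Chebyshev (T measureT)

theorem exists_eq_sum_smul_T {K : Type*} [Field K] [NeZero (2 : K)] {m : ℕ} {q : K[X]}
    (hq : q.degree < m) : ∃ c : ℕ → K, q = ∑ k ∈ range m, c k • T K k := by
  have hmem : q ∈ degreeLT K m := mem_degreeLT.2 hq
  rw [← Sequence.span_degreeLT (Chebyshev.chebyshevTsequence K) (by simp),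
    show Set.Iio m = range m by simp, Submodule.mem_span_image_finset_iff_exists_fun'] at hmem
  obtain ⟨c, hc⟩ := hmem
  exact ⟨c, hc.symm⟩

theorem abs_integral_measureT_le {f : ℝ → ℝ} {E : ℝ}
    (hf : ∀ x ∈ Set.Icc (-1 : ℝ) 1, |f x| ≤ E) : |∫ x, f x ∂measureT| ≤ E * π := by
  rw [Chebyshev.integral_measureT_eq_integral_cos]
  have := intervalIntegral.norm_integral_le_of_norm_le_const (a := 0) (b := π)
    (f := fun θ => f (cos θ)) (C := E)
    (fun θ _ => hf _ ⟨neg_one_le_cos θ, cos_le_one θ⟩)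
  simpa [abs_of_nonneg pi_nonneg] using this

theorem abs_le_two_mul_of_abs_eval_sum_smul_T_le {m : ℕ} {c : ℕ → ℝ} {E : ℝ}
    (hE : ∀ x ∈ Set.Icc (-1 : ℝ) 1, |(∑ k ∈ range m, c k • T ℝ k).eval x| ≤ E)
    {k : ℕ} (hk : k < m) : |c k| ≤ 2 * E := by
  have horth : ∫ x, (∑ j ∈ range m, c j • T ℝ j).eval x * (T ℝ k).eval x ∂measureT
      = c k * ∫ x, (T ℝ k).eval x * (T ℝ k).eval x ∂measureT := by
    simp only [eval_finsetSum, eval_smul, smul_eq_mul, Finset.sum_mul]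
    rw [MeasureTheory.integral_finsetSum _ fun j _ => Chebyshev.integrable_measureT (by fun_prop)]
    simp only [mul_assoc, integral_const_mul]
    rw [Finset.sum_eq_single_of_mem k (mem_range.2 hk) fun j _ hjk => by
      rw [Chebyshev.integral_eval_T_real_mul_eval_T_real_measureT_of_ne hjk, mul_zero]]
  have hnorm : π / 2 ≤ ∫ x, (T ℝ k).eval x * (T ℝ k).eval x ∂measureT := by
    rcases eq_or_ne k 0 with rfl | hk0
    · rw [Nat.cast_zero, Chebyshev.integral_eval_T_real_mul_self_measureT_zero]; linarith [pi_pos]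
    · rw [Chebyshev.integral_T_real_mul_self_measureT_of_ne_zero hk0]
  have hbound := abs_integral_measureT_le (f := fun x =>
      (∑ j ∈ range m, c j • T ℝ j).eval x * (T ℝ k).eval x) (E := E) fun x hx => by
    rw [abs_mul]
    exact (mul_le_of_le_one_right (abs_nonneg _)
      (Chebyshev.abs_eval_T_real_le_one _ (abs_le.2 hx))).trans (hE x hx)
  rw [horth, abs_mul, abs_of_nonneg ((div_nonneg pi_nonneg zero_le_two).trans hnorm)] at hbound
  nlinarith [pi_pos, abs_nonneg (c k)]

theorem two_mul_eval_T_of_two_mul_eq {R : Type*} [CommRing R] {x w u : R} (hwu : w * u = 1)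
    (hx : 2 * x = w + u) (n : ℕ) : 2 * (T R n).eval x = w ^ n + u ^ n := by
  have := congr_arg (eval x) (Chebyshev.C_comp_two_mul_X R n)
  simp only [eval_comp, eval_mul, eval_ofNat, eval_X] at this
  rw [← this, hx, ← dickson_one_one_eq_chebyshev_C, dickson_one_one_eval_add_inv w u hwu]

theorem degree_sub_smul_T_lt {K : Type*} [Field K] [NeZero (2 : K)] {p : K[X]} (hp : p.Monic) :
    (p - ((2 : K) ^ (p.natDegree - 1))⁻¹ • T K p.natDegree).degree < p.natDegree := by
  have h2 : (2 : K) ^ (p.natDegree - 1) ≠ 0 := pow_ne_zero _ two_ne_zero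
  have hlc : (((2 : K) ^ (p.natDegree - 1))⁻¹ • T K p.natDegree).leadingCoeff = 1 := by
    rw [smul_eq_C_mul, leadingCoeff_mul, leadingCoeff_C, Chebyshev.leadingCoeff_T,
      Int.natAbs_natCast, inv_mul_cancel₀ h2]
  have hdeg : (((2 : K) ^ (p.natDegree - 1))⁻¹ • T K p.natDegree).degree = p.natDegree := by
    rw [smul_eq_C_mul, degree_C_mul (inv_ne_zero h2), Chebyshev.degree_T, Int.natAbs_natCast]
  have := degree_sub_lt_left ((degree_eq_natDegree hp.ne_zero).trans hdeg.symm) hp.ne_zero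
    (hp.leadingCoeff.trans hlc.symm)
  rwa [degree_eq_natDegree hp.ne_zero] at this

section RCLike

variable {𝕜 : Type*} [RCLike 𝕜] {z w : 𝕜}

theorem norm_eval_T_le_pow (hw : 1 ≤ ‖w‖) (hz : 2 * z = w + w⁻¹) (n : ℕ) :
    ‖(T 𝕜 n).eval z‖ ≤ ‖w‖ ^ n := by
  have hw0 : w ≠ 0 := norm_pos_iff.1 (one_pos.trans_le hw)
  have h := congr_arg norm (two_mul_eval_T_of_two_mul_eq (mul_inv_cancel₀ hw0) hz n)
  have hinv : ‖w⁻¹‖ ^ n ≤ ‖w‖ ^ n := by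
    gcongr
    rw [norm_inv]
    exact (inv_le_one_of_one_le₀ hw).trans hw
  rw [norm_mul, RCLike.norm_two] at h
  linarith [norm_add_le (w ^ n) (w⁻¹ ^ n), norm_pow w n, norm_pow w⁻¹ n]

theorem pow_sub_one_le_two_mul_norm_eval_T (hw : 1 ≤ ‖w‖) (hz : 2 * z = w + w⁻¹) (n : ℕ) :
    ‖w‖ ^ n - 1 ≤ 2 * ‖(T 𝕜 n).eval z‖ := by
  have hw0 : w ≠ 0 := norm_pos_iff.1 (one_pos.trans_le hw)
  have h := congr_arg norm (two_mul_eval_T_of_two_mul_eq (mul_inv_cancel₀ hw0) hz n)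
  have hinv : ‖w⁻¹ ^ n‖ ≤ 1 := by
    rw [norm_pow, norm_inv]
    exact pow_le_one₀ (by positivity) (inv_le_one_of_one_le₀ hw)
  rw [norm_mul, RCLike.norm_two] at h
  have := norm_sub_le (w ^ n + w⁻¹ ^ n) (w⁻¹ ^ n)
  rw [add_sub_cancel_right, norm_pow] at this
  linarith

theorem norm_aeval_le_of_abs_eval_le {q : ℝ[X]} {m : ℕ} (hq : q.degree < m) {E : ℝ}
    (hE : ∀ x ∈ Set.Icc (-1 : ℝ) 1, |q.eval x| ≤ E) (hw : 1 ≤ ‖w‖) (hz : 2 * z = w + w⁻¹) :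
    ‖aeval z q‖ ≤ 2 * E * ∑ k ∈ range m, ‖w‖ ^ k := by
  obtain ⟨c, rfl⟩ := exists_eq_sum_smul_T hq
  simp only [map_sum, map_smul, Chebyshev.aeval_T, mul_sum]
  refine (norm_sum_le _ _).trans (sum_le_sum fun k hk => ?_)
  have hck := abs_le_two_mul_of_abs_eval_sum_smul_T_le hE (mem_range.1 hk)
  rw [norm_smul, Real.norm_eq_abs]
  exact mul_le_mul hck (norm_eval_T_le_pow hw hz k) (norm_nonneg _) ((abs_nonneg _).trans hck)

theorem norm_aeval_le_of_abs_coeff_le (p : ℝ[X]) {A : ℝ}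
    (hA : ∀ i, |p.coeff i| ≤ A) (hz : 1 ≤ ‖z‖) :
    ‖aeval z p‖ ≤ (p.natDegree + 1) * A * ‖z‖ ^ p.natDegree := by
  rw [aeval_eq_sum_range]
  calc ‖∑ i ∈ range (p.natDegree + 1), p.coeff i • z ^ i‖
      ≤ ∑ i ∈ range (p.natDegree + 1), A * ‖z‖ ^ p.natDegree := by
        refine (norm_sum_le _ _).trans (sum_le_sum fun i hi => ?_)
        rw [norm_smul, norm_pow, Real.norm_eq_abs]
        exact mul_le_mul (hA i) (pow_le_pow_right₀ hz (Nat.lt_succ_iff.1 (mem_range.1 hi)))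
          (by positivity) ((abs_nonneg _).trans (hA 0))
    _ = (p.natDegree + 1) * A * ‖z‖ ^ p.natDegree := by
        rw [sum_const, card_range, nsmul_eq_mul, mul_assoc]; push_cast; ring

theorem norm_aeval_ge_of_monic_of_abs_eval_le {p : ℝ[X]} (hp : p.Monic) {M : ℝ}
    (hflat : ∀ x ∈ Set.Icc (-1 : ℝ) 1, |p.eval x| ≤ M * ((2 : ℝ) ^ (p.natDegree - 1))⁻¹)
    (hw : 1 < ‖w‖) (hMw : 8 * (M + 1) ≤ ‖w‖ - 1) (hz : 2 * z = w + w⁻¹) :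
    ((2 : ℝ) ^ (p.natDegree - 1))⁻¹ * (‖w‖ ^ p.natDegree - 1) / 4 ≤ ‖aeval z p‖ := by
  set n := p.natDegree
  set t : ℝ := ((2 : ℝ) ^ (n - 1))⁻¹
  set q := p - t • T ℝ n
  have ht : 0 < t := by positivity
  have hq : ∀ x ∈ Set.Icc (-1 : ℝ) 1, |q.eval x| ≤ (M + 1) * t := fun x hx => by
    have hT := Chebyshev.abs_eval_T_real_le_one n (abs_le.2 hx)
    calc |q.eval x| ≤ |p.eval x| + t * |(T ℝ n).eval x| := by
          simpa [q, abs_mul, abs_of_pos ht] using abs_sub (p.eval x) (t * (T ℝ n).eval x)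
      _ ≤ (M + 1) * t := by nlinarith [hflat x hx]
  have hgeom : ∑ k ∈ range n, ‖w‖ ^ k = (‖w‖ ^ n - 1) / (‖w‖ - 1) := geom_sum_eq hw.ne' n
  have hpow : 0 ≤ ‖w‖ ^ n - 1 := sub_nonneg.2 (one_le_pow₀ hw.le)
  have hqz : ‖aeval z q‖ ≤ t * (‖w‖ ^ n - 1) / 4 := by
    refine (norm_aeval_le_of_abs_eval_le (degree_sub_smul_T_lt hp) hq hw.le hz).trans ?_
    rw [hgeom, le_div_iff₀ (by norm_num), mul_div_assoc', div_mul_eq_mul_div,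
      div_le_iff₀ (by linarith)]
    nlinarith [mul_nonneg (sub_nonneg.2 hMw) (mul_nonneg ht.le hpow)]
  have hTz : t * (‖w‖ ^ n - 1) / 2 ≤ ‖aeval z (t • T ℝ n)‖ := by
    rw [map_smul, Chebyshev.aeval_T, norm_smul, Real.norm_eq_abs, abs_of_pos ht]
    nlinarith [pow_sub_one_le_two_mul_norm_eval_T hw.le hz n]
  have hpq : aeval z (t • T ℝ n) = aeval z p - aeval z q := by rw [← map_sub, sub_sub_cancel]
  rw [hpq] at hTz
  linarith [norm_sub_le (aeval z p) (aeval z q)]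

end RCLike

theorem zpow_one_sub_natCast_eq_inv_pow {G : Type*} [DivisionMonoid G] (a : G) {n : ℕ}
    (hn : n ≠ 0) : a ^ (1 - (n : ℤ)) = (a ^ (n - 1))⁻¹ := by
  rw [← zpow_natCast, ← zpow_neg, Nat.cast_sub (Nat.one_le_iff_ne_zero.2 hn)]
  ring_nf

theorem exists_abs_coeff_ge_of_monic_of_abs_eval_le {p : ℝ[X]} (hp : p.Monic)
    (hn : p.natDegree ≠ 0) {M ρ : ℝ}
    (hflat : ∀ x ∈ Set.Icc (-1 : ℝ) 1, |p.eval x| ≤ M * ((2 : ℝ) ^ (p.natDegree - 1))⁻¹)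
    (hρ : 3 ≤ ρ) (hMρ : 8 * (M + 1) ≤ ρ - 1) :
    ∃ j ≤ p.natDegree, (ρ / (ρ - ρ⁻¹)) ^ p.natDegree / (8 * p.natDegree) ≤ |p.coeff j| := by
  set n := p.natDegree with hn_def
  set y := (ρ - ρ⁻¹) / 2
  have hy : 1 ≤ y := by
    have : ρ⁻¹ ≤ 1 := inv_le_one_of_one_le₀ (by linarith)
    simp only [y]; linarith
  have hw : ‖(ρ : ℂ) * Complex.I‖ = ρ := by simp; linarith
  have hz : ‖(y : ℂ) * Complex.I‖ = y := by simp; linarith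
  have hzw : 2 * ((y : ℂ) * Complex.I) = ρ * Complex.I + ((ρ : ℂ) * Complex.I)⁻¹ := by
    rw [mul_inv, Complex.inv_I]
    simp only [y]
    push_cast
    ring
  obtain ⟨j, hj, hjmax⟩ :=
    exists_max_image (range (n + 1)) (fun i => |p.coeff i|) nonempty_range_add_one
  have hA : ∀ i, |p.coeff i| ≤ |p.coeff j| := fun i => by
    rcases le_or_gt i n with hi | hi
    · exact hjmax i (mem_range.2 (Nat.lt_succ_of_le hi))
    · rw [coeff_eq_zero_of_natDegree_lt hi, abs_zero]; exact abs_nonneg _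
  have hlow :=
    norm_aeval_ge_of_monic_of_abs_eval_le hp hflat (by linarith) (by rw [hw]; exact hMρ) hzw
  have hup := norm_aeval_le_of_abs_coeff_le p hA (by rw [hz]; exact hy)
  rw [hw, ← hn_def] at hlow
  rw [hz, ← hn_def] at hup
  refine ⟨j, Nat.lt_succ_iff.1 (mem_range.1 hj), ?_⟩
  have hn1 : (1 : ℝ) ≤ n := Nat.one_le_cast.2 (Nat.one_le_iff_ne_zero.2 hn)
  have hρn : 3 ≤ ρ ^ n := hρ.trans (le_self_pow₀ (by linarith) hn)
  have ht : ((2 : ℝ) ^ (n - 1))⁻¹ = 2 / 2 ^ n := by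
    rw [← pow_sub_one_mul hn, mul_comm, ← div_div, div_self two_ne_zero, one_div]
  have h2y : ρ - ρ⁻¹ = 2 * y := by ring
  rw [ht, div_mul_eq_mul_div, div_div, div_le_iff₀ (by positivity)] at hlow
  rw [h2y, div_pow, mul_pow, div_div, div_le_iff₀ (by positivity)]
  calc ρ ^ n ≤ 2 * (ρ ^ n - 1) := by linarith
    _ ≤ ‖aeval ((y : ℂ) * Complex.I) p‖ * (2 ^ n * 4) := hlow
    _ ≤ (n + 1) * |p.coeff j| * y ^ n * (2 ^ n * 4) := by gcongr
    _ ≤ |p.coeff j| * (2 ^ n * y ^ n * (8 * n)) := by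
        have : 0 ≤ |p.coeff j| * y ^ n * 2 ^ n := by positivity
        nlinarith

theorem coeff_growth_of_flat_monic (M : ℝ) (hM : 0 < M) :
    ∃ B > (0 : ℝ), ∃ b > (0 : ℝ), ∃ N : ℕ, ∀ n ≥ N, ∀ p : ℝ[X],
      p.Monic → p.natDegree = n →
      (∀ x ∈ Set.Icc (-1 : ℝ) 1, |p.eval x| ≤ M * 2 ^ (1 - (n : ℤ))) →
      ∃ j ≤ n, B * (2 : ℝ) ^ (b * n) / n ≤ |p.coeff j| := by
  set ρ := 8 * M + 10
  have hρ : 3 ≤ ρ := by linarith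
  have hc : 1 < ρ / (ρ - ρ⁻¹) := by
    rw [one_lt_div (by nlinarith [mul_inv_cancel₀ (by linarith : ρ ≠ 0)])]
    linarith [inv_pos.2 (by linarith : 0 < ρ)]
  refine ⟨1 / 8, by norm_num, Real.logb 2 (ρ / (ρ - ρ⁻¹)), Real.logb_pos one_lt_two hc, 1,
    fun n hn p hp hdeg hflat => ?_⟩
  subst hdeg
  have hn0 : p.natDegree ≠ 0 := Nat.one_le_iff_ne_zero.1 hn
  rw [zpow_one_sub_natCast_eq_inv_pow 2 hn0] at hflat
  obtain ⟨j, hj, hcoeff⟩ :=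
    exists_abs_coeff_ge_of_monic_of_abs_eval_le hp hn0 hflat hρ (by linarith)
  refine ⟨j, hj, le_of_eq_of_le ?_ hcoeff⟩
  rw [Real.rpow_mul zero_le_two, Real.rpow_logb zero_lt_two one_lt_two.ne' (by linarith),
    Real.rpow_natCast]
  ring
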